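/- arXiv:1405.7511 — 4 statements merged into one kernel-verified Lean document; each statement's English description precedes it below -/
import Mathlib

section
/- For 0 < β ≤ 1 and x ≥ β^{1/4}, with c(x) = sqrt((x⁴ − β)/(x⁴ + βx²)), c̃(x) = sqrt((x⁴ − β)/(x⁴ + x²)), and y(x) = sqrt((x + 1/x)(x + β/x)), the identity x·c(x)·c̃(x) = (1/y(x))·sqrt((y(x)² − β − 1)² − 4β) holds; i.e., the optimal Frobenius shrinker η*(y) = x c(x) c̃(x) equals sqrt((y² − β − 1)² − 4β)/y. -/
/-! With `y² = (x + 1/x)(x + β/x) = x² + 1 + β + β/x²`, the discriminant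
`(y² − β − 1)² − 4β` is the perfect square `(x² − β/x²)²`, so its root is `(x⁴ − β)/x²` as soon
as `x⁴ ≥ β`. Both sides of the identity are then nonnegative with the same square
`(x⁴ − β)² / (x²(x² + 1)(x² + β))`. -/

open Real

lemma le_pow_four_of_rpow_quarter_le {β x : ℝ} (hβ : 0 ≤ β) (hx : β ^ ((1:ℝ)/4) ≤ x) :
    β ≤ x ^ 4 :=
  calc β = (β ^ ((1:ℝ)/4)) ^ 4 := by rw [← rpow_natCast, ← rpow_mul hβ]; norm_num
    _ ≤ x ^ 4 := by gcongr

lemma spike_discriminant_eq_sq (β : ℝ) {x : ℝ} (hx : x ≠ 0) :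
    ((x + 1/x) * (x + β/x) - β - 1) ^ 2 - 4 * β = (x ^ 2 - β / x ^ 2) ^ 2 := by
  field_simp
  ring

theorem frobenius_shrinker_identity_general (β : ℝ) (hβ0 : 0 < β)
    (x : ℝ) (hx : β ^ ((1:ℝ)/4) ≤ x) :
    x * Real.sqrt ((x^4 - β)/(x^4 + β*x^2)) * Real.sqrt ((x^4 - β)/(x^4 + x^2)) =
      (1 / Real.sqrt ((x + 1/x) * (x + β/x))) *
        Real.sqrt (((Real.sqrt ((x + 1/x) * (x + β/x)))^2 - β - 1)^2 - 4*β) := by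
  have hx0 : 0 < x := (rpow_pos_of_pos hβ0 _).trans_le hx
  have hx4 : 0 ≤ x ^ 4 - β := sub_nonneg.mpr (le_pow_four_of_rpow_quarter_le hβ0.le hx)
  have hy : 0 ≤ (x + 1/x) * (x + β/x) := by positivity
  have hroot : 0 ≤ x ^ 2 - β / x ^ 2 := by
    rw [sub_nonneg, div_le_iff₀ (by positivity)]
    linarith
  rw [sq_sqrt hy, spike_discriminant_eq_sq β hx0.ne', sqrt_sq hroot]
  refine (sq_eq_sq₀ (by positivity) (by positivity)).mp ?_
  rw [mul_pow, mul_pow, mul_pow, sq_sqrt (div_nonneg hx4 (by positivity)),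
    sq_sqrt (div_nonneg hx4 (by positivity)), div_pow, one_pow, sq_sqrt hy]
  field_simp

/-- For `0 < β ≤ 1` and `x ≥ β^{1/4}`, with
`c(x) = sqrt((x⁴−β)/(x⁴+βx²))`, `c̃(x) = sqrt((x⁴−β)/(x⁴+x²))`,
`y(x) = sqrt((x+1/x)(x+β/x))`, one has
`x·c(x)·c̃(x) = (1/y(x))·sqrt((y(x)²−β−1)² − 4β)`. -/
theorem frobenius_shrinker_identity (β : ℝ) (hβ0 : 0 < β) (hβ1 : β ≤ 1)
    (x : ℝ) (hx : β ^ ((1:ℝ)/4) ≤ x) :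
    x * Real.sqrt ((x^4 - β)/(x^4 + β*x^2)) * Real.sqrt ((x^4 - β)/(x^4 + x^2)) =
      (1 / Real.sqrt ((x + 1/x) * (x + β/x))) *
        Real.sqrt (((Real.sqrt ((x + 1/x) * (x + β/x)))^2 - β - 1)^2 - 4*β) :=
  frobenius_shrinker_identity_general β hβ0 x hx
end

section
/- For x > 0 and c, c̃ ∈ [0,1] with s = sqrt(1−c²), s̃ = sqrt(1−c̃²), the operator norm of Δ(x) = [[xcc̃ − x, xcs̃],[xc̃s, xss̃]] (i.e., Δ(η) at η = x) is its largest singular value σ₊(Δ(x)) = x·sqrt(1 − cc̃ + |c − c̃|). -/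
/-- For `x > 0` and `c, c̃ ∈ [0,1]`, the operator norm of
`Δ(x) = [[xcc̃ − x, xcs̃],[xc̃s, xss̃]]`, namely
`σ₊ = (1/√2)·sqrt(t + sqrt(t² − 4d²))` with `t = 2x²(1 − cc̃)` and
`d = −x²ss̃`, equals `x·sqrt(1 − cc̃ + |c − c̃|)`. -/
theorem operator_norm_at_x (x c ct : ℝ) (hx : 0 < x)
    (hc : c ∈ Set.Icc (0:ℝ) 1) (hct : ct ∈ Set.Icc (0:ℝ) 1) :
    let s := Real.sqrt (1 - c^2)
    let st := Real.sqrt (1 - ct^2)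
    let t : ℝ := 2*x^2*(1 - c*ct)
    let d : ℝ := -(x^2*s*st)
    (1 / Real.sqrt 2) * Real.sqrt (t + Real.sqrt (t^2 - 4*d^2)) =
      x * Real.sqrt (1 - c*ct + |c - ct|) := by
  intro s st t d
  obtain ⟨hc0, hc1⟩ := hc
  obtain ⟨hct0, hct1⟩ := hct
  have hs2 : s ^ 2 = 1 - c ^ 2 := Real.sq_sqrt (by nlinarith)
  have hst2 : st ^ 2 = 1 - ct ^ 2 := Real.sq_sqrt (by nlinarith)
  have hdisc : t ^ 2 - 4 * d ^ 2 = (2 * x ^ 2 * (c - ct)) ^ 2 := by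
    have : d ^ 2 = x ^ 4 * (1 - c ^ 2) * (1 - ct ^ 2) := by
      simp only [d]; rw [show (-(x^2*s*st))^2 = x^4 * s^2 * st^2 by ring, hs2, hst2]
    rw [this]; simp only [t]; ring
  have hsq : Real.sqrt (t ^ 2 - 4 * d ^ 2) = 2 * x ^ 2 * |c - ct| := by
    rw [hdisc, Real.sqrt_sq_eq_abs, abs_mul, abs_of_pos (by positivity : (0:ℝ) < 2 * x ^ 2)]
  have hu : (0:ℝ) ≤ 1 - c * ct + |c - ct| := by
    have : c * ct ≤ 1 := by nlinarith
    have := abs_nonneg (c - ct)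
    linarith
  have hsum : t + Real.sqrt (t ^ 2 - 4 * d ^ 2)
      = 2 * x ^ 2 * (1 - c * ct + |c - ct|) := by
    rw [hsq]; simp only [t]; ring
  rw [hsum, show 2 * x ^ 2 * (1 - c * ct + |c - ct|)
      = 2 * (x ^ 2 * (1 - c * ct + |c - ct|)) by ring,
    Real.sqrt_mul (by norm_num), Real.sqrt_mul (by positivity),
    Real.sqrt_sq hx.le]
  have h2 : Real.sqrt 2 ≠ 0 := by positivity
  field_simp
end

section
/- For x > 0 and c, c̃ ∈ [0,1] with cc̃ ≥ ss̃ where s = sqrt(1−c²), s̃ = sqrt(1−c̃²), the nuclear norm (sum of singular values) of Δ(η) = [[ηcc̃ − x, ηcs̃],[ηc̃s, ηss̃]] as a function of η ≥ 0 is minimized at η = x(cc̃ − ss̃). -/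
/-!
For a 2×2 matrix the nuclear norm is `σ₊ + σ₋ = √(‖Δ‖_F² + 2|det Δ|)`, since
`(σ₊ + σ₋)² = σ₊² + σ₋² + 2σ₊σ₋`. Along the family `Δ(η)` with `η ≥ 0` this gives
`‖Δ(η)‖_F² + 2|det Δ(η)| = η² − 2xη(cc̃ − ss̃) + x²`, a quadratic in `η` with vertex at
`η = x(cc̃ − ss̃)`, which is admissible (`≥ 0`) exactly because `cc̃ ≥ ss̃`.
-/

open Real

/-- The sum `σ₊ + σ₋` of the singular values of a 2×2 matrix, in terms of its squared
Frobenius norm `t` and its determinant `d`. -/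
noncomputable def singularValueSum (t d : ℝ) : ℝ :=
  (1 / √2) * √(t + √(t ^ 2 - 4 * d ^ 2)) + (1 / √2) * √(t - √(t ^ 2 - 4 * d ^ 2))

theorem sqrt_add_sqrt_add_sqrt_sub_sqrt {t d : ℝ} (h : 2 * |d| ≤ t) :
    √(t + √(t ^ 2 - 4 * d ^ 2)) + √(t - √(t ^ 2 - 4 * d ^ 2)) = √(2 * (t + 2 * |d|)) := by
  have ht : 0 ≤ t := le_trans (by positivity) h
  have hdisc : 4 * d ^ 2 ≤ t ^ 2 := by nlinarith [sq_abs d, abs_nonneg d]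
  set D := √(t ^ 2 - 4 * d ^ 2)
  have hD : 0 ≤ D := sqrt_nonneg _
  have hDt : D ≤ t := (sqrt_le_left ht).2 (by nlinarith [sq_nonneg d])
  have hprod : √(t + D) * √(t - D) = 2 * |d| := by
    rw [← sqrt_mul (by linarith), ← sqrt_sq (by positivity : 0 ≤ 2 * |d|)]
    congr 1
    rw [show (t + D) * (t - D) = t ^ 2 - D ^ 2 by ring, sq_sqrt (by linarith)]
    rw [mul_pow, sq_abs]
    ring
  symm
  rw [sqrt_eq_iff_eq_sq (by positivity) (by positivity), add_sq, sq_sqrt (by linarith),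
    sq_sqrt (by linarith), mul_assoc, hprod]
  ring

theorem singularValueSum_eq_sqrt {t d : ℝ} (h : 2 * |d| ≤ t) :
    singularValueSum t d = √(t + 2 * |d|) := by
  rw [singularValueSum, ← mul_add, sqrt_add_sqrt_add_sqrt_sub_sqrt h,
    sqrt_mul zero_le_two, ← mul_assoc, one_div_mul_cancel (by positivity), one_mul]

/-- `cos α cos β + sin α sin β = cos (α - β) ≤ 1`, written without angles. -/
theorem mul_add_sqrt_one_sub_sq_mul_le_one {c c' : ℝ} (hc : c ^ 2 ≤ 1) (hc' : c' ^ 2 ≤ 1) :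
    c * c' + √(1 - c ^ 2) * √(1 - c' ^ 2) ≤ 1 := by
  have hs := sq_sqrt (sub_nonneg.2 hc)
  have hs' := sq_sqrt (sub_nonneg.2 hc')
  nlinarith [sq_nonneg (c - c'), sq_nonneg (√(1 - c ^ 2) - √(1 - c' ^ 2))]

section Family

variable {x η c c' s s' : ℝ}

theorem two_mul_abs_le_frobenius (hx : 0 ≤ x) (hη : 0 ≤ η) (hs : 0 ≤ s) (hs' : 0 ≤ s')
    (hcos : c * c' + s * s' ≤ 1) :
    2 * |-(x * η * s * s')| ≤ η ^ 2 + x ^ 2 - 2 * x * η * c * c' := by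
  have hxη : 0 ≤ x * η := mul_nonneg hx hη
  rw [abs_neg, abs_of_nonneg (by positivity)]
  nlinarith [sq_nonneg (η - x), mul_le_mul_of_nonneg_left hcos hxη]

theorem singularValueSum_family_eq (hx : 0 ≤ x) (hη : 0 ≤ η) (hs : 0 ≤ s) (hs' : 0 ≤ s')
    (hcos : c * c' + s * s' ≤ 1) :
    singularValueSum (η ^ 2 + x ^ 2 - 2 * x * η * c * c') (-(x * η * s * s')) =
      √((η - x * (c * c' - s * s')) ^ 2 + x ^ 2 * (1 - (c * c' - s * s') ^ 2)) := by
  rw [singularValueSum_eq_sqrt (two_mul_abs_le_frobenius hx hη hs hs' hcos), abs_neg,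
    abs_of_nonneg (by positivity)]
  ring_nf

end Family

/-- For `x > 0`, `c, c̃ ∈ (0,1)` with `cc̃ ≥ ss̃`, the nuclear norm
`σ₊(η) + σ₋(η)` of `Δ(η) = [[ηcc̃ − x, ηcs̃],[ηc̃s, ηss̃]]`, with
`σ±(η) = (1/√2)·sqrt(t(η) ± sqrt(t(η)² − 4d(η)²))`,
`t(η) = η² + x² − 2xηcc̃`, `d(η) = −xηss̃`, is minimized over `η ≥ 0`
at `η = x(cc̃ − ss̃)`. -/
theorem nuclear_norm_min (x c ct : ℝ) (hx : 0 < x)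
    (hc : c ∈ Set.Ioo (0:ℝ) 1) (hct : ct ∈ Set.Ioo (0:ℝ) 1)
    (hmaj : Real.sqrt (1 - c^2) * Real.sqrt (1 - ct^2) ≤ c * ct) :
    let s := Real.sqrt (1 - c^2)
    let st := Real.sqrt (1 - ct^2)
    let t : ℝ → ℝ := fun η => η^2 + x^2 - 2*x*η*c*ct
    let d : ℝ → ℝ := fun η => -(x*η*s*st)
    let N : ℝ → ℝ := fun η =>
      (1 / Real.sqrt 2) * Real.sqrt (t η + Real.sqrt ((t η)^2 - 4*(d η)^2)) +
      (1 / Real.sqrt 2) * Real.sqrt (t η - Real.sqrt ((t η)^2 - 4*(d η)^2))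
    ∀ η : ℝ, 0 ≤ η → N (x * (c*ct - s*st)) ≤ N η := by
  intro s st t d N η hη
  have hcos : c * ct + s * st ≤ 1 :=
    mul_add_sqrt_one_sub_sq_mul_le_one (by nlinarith [hc.1, hc.2]) (by nlinarith [hct.1, hct.2])
  have hvertex : 0 ≤ x * (c * ct - s * st) := mul_nonneg hx.le (sub_nonneg.2 hmaj)
  have hN : ∀ ξ, 0 ≤ ξ →
      N ξ = √((ξ - x * (c * ct - s * st)) ^ 2 + x ^ 2 * (1 - (c * ct - s * st) ^ 2)) :=
    fun ξ hξ => singularValueSum_family_eq hx.le hξ (sqrt_nonneg _) (sqrt_nonneg _) hcos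
  rw [hN _ hvertex, hN η hη, sub_self]
  exact sqrt_le_sqrt (by nlinarith [sq_nonneg (η - x * (c * ct - s * st))])
end

section
/- For 0 < β ≤ 1 and x ≥ β^{1/4}, with c(x) = sqrt((x⁴−β)/(x⁴+βx²)), c̃(x) = sqrt((x⁴−β)/(x⁴+x²)), s = sqrt(1−c²), s̃ = sqrt(1−c̃²), and y = y(x) = sqrt((x+1/x)(x+β/x)), we have x·(c(x)·c̃(x) − s(x)·s̃(x)) = (x⁴ − β − √β·x·y(x))/(x²·y(x)). -/
/-- For `0 < β ≤ 1` and `x ≥ β^{1/4}`, with `c, c̃, s, s̃, y` as in the paper,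
`x·(c(x)·c̃(x) − s(x)·s̃(x)) = (x⁴ − β − √β·x·y(x))/(x²·y(x))`. -/
theorem nuclear_shrinker_identity (β : ℝ) (hβ0 : 0 < β) (hβ1 : β ≤ 1)
    (x : ℝ) (hx : β ^ ((1:ℝ)/4) ≤ x) :
    let c := Real.sqrt ((x^4 - β)/(x^4 + β*x^2))
    let ct := Real.sqrt ((x^4 - β)/(x^4 + x^2))
    let s := Real.sqrt (1 - c^2)
    let st := Real.sqrt (1 - ct^2)
    let y := Real.sqrt ((x + 1/x) * (x + β/x))
    x * (c * ct - s * st) = (x^4 - β - Real.sqrt β * x * y) / (x^2 * y) := by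
  intro c ct s st y
  have hb4 : 0 < β ^ ((1:ℝ)/4) := Real.rpow_pos_of_pos hβ0 _
  have hx0 : 0 < x := lt_of_lt_of_le hb4 hx
  have hbx : β ≤ x ^ 4 := by
    have h : (β ^ ((1:ℝ)/4)) ^ 4 ≤ x ^ 4 := pow_le_pow_left₀ hb4.le hx 4
    calc β = (β ^ ((1:ℝ)/4)) ^ 4 := by
            rw [← Real.rpow_natCast (β ^ ((1:ℝ)/4)) 4, ← Real.rpow_mul hβ0.le]
            norm_num
      _ ≤ x ^ 4 := h
  have hd1 : 0 < x ^ 4 + β * x ^ 2 := by positivity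
  have hd2 : 0 < x ^ 4 + x ^ 2 := by positivity
  have hy2 : y ^ 2 = (x + 1/x) * (x + β/x) := Real.sq_sqrt (by positivity)
  have hy0 : 0 < y := Real.sqrt_pos.mpr (by positivity)
  have hA : (0:ℝ) ≤ (x^4 - β)/(x^4 + β*x^2) := div_nonneg (by linarith) hd1.le
  have hB : (0:ℝ) ≤ (x^4 - β)/(x^4 + x^2) := div_nonneg (by linarith) hd2.le
  have hcct : c * ct = (x^4 - β) / (x^3 * y) := by
    show Real.sqrt _ * Real.sqrt _ = _
    rw [← Real.sqrt_mul hA]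
    have h : ((x^4 - β)/(x^4 + β*x^2)) * ((x^4 - β)/(x^4 + x^2))
        = ((x^4 - β)/(x^3 * y))^2 := by
      rw [div_pow, mul_pow, hy2]
      field_simp
    rw [h, Real.sqrt_sq (div_nonneg (by linarith) (by positivity))]
  have hsst : s * st = Real.sqrt β / x^2 := by
    show Real.sqrt _ * Real.sqrt _ = _
    rw [Real.sq_sqrt hA, Real.sq_sqrt hB, ← Real.sqrt_mul (by rw [sub_nonneg]; exact (div_le_one hd1).mpr (by nlinarith))]
    have h : (1 - (x^4 - β)/(x^4 + β*x^2)) * (1 - (x^4 - β)/(x^4 + x^2))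
        = (Real.sqrt β / x^2)^2 := by
      rw [div_pow, Real.sq_sqrt hβ0.le]
      field_simp
      ring
    rw [h, Real.sqrt_sq (div_nonneg (Real.sqrt_nonneg _) (by positivity))]
  rw [hcct, hsst]
  field_simp
end
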